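/- Let Σ = (G, σ) be a signed graph with unique n-th power Σ^n = (G^n, σ′). For any u–v path P of length k in Σ^n, there exists a u–v path P′ in Σ of some length k′ with (k−1)n + 1 ≤ k′ ≤ kn such that σ′(P) = σ(P′). -/

import Mathlib

open SimpleGraph Polynomial

variable {V : Type*}

/-- The sign of a walk: the product of the signs of its edges. -/
def walkSign {G : SimpleGraph V} (sg : V → V → ℤ) {u v : V} (p : G.Walk u v) : ℤ :=
  (p.darts.map fun d => sg d.toProd.1 d.toProd.2).prod

/-- `sigmaMax G sg u v`: the maximum sign over all shortest `u`–`v` paths. -/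
noncomputable def sigmaMax (G : SimpleGraph V) (sg : V → V → ℤ) (u v : V) : ℤ := by
  classical
  exact if ∃ p : G.Walk u v, p.length = G.dist u v ∧ walkSign sg p = 1 then 1 else -1

/-- `sigmaMin G sg u v`: the minimum sign over all shortest `u`–`v` paths. -/
noncomputable def sigmaMin (G : SimpleGraph V) (sg : V → V → ℤ) (u v : V) : ℤ := by
  classical
  exact if ∃ p : G.Walk u v, p.length = G.dist u v ∧ walkSign sg p = -1 then -1 else 1

/-- `u` and `v` are distance-compatible: all shortest `u`–`v` paths have the same sign. -/
def pairCompatible (G : SimpleGraph V) (sg : V → V → ℤ) (u v : V) : Prop :=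
  ∀ p q : G.Walk u v, p.length = G.dist u v → q.length = G.dist u v →
    walkSign sg p = walkSign sg q

/-- The `n`-th power graph: `u ~ v` iff `u ≠ v` and `d(u,v) ≤ n`. -/
def powerGraph (G : SimpleGraph V) (n : ℕ) : SimpleGraph V where
  Adj u v := u ≠ v ∧ G.dist u v ≤ n
  symm := by
    constructor
    intro u v h
    exact ⟨h.1.symm, by rw [SimpleGraph.dist_comm]; exact h.2⟩
  loopless := by
    constructor
    intro u h
    exact h.1 rfl

/-- A signed graph is balanced if every cycle has positive sign. -/
def SBalanced (G : SimpleGraph V) (sg : V → V → ℤ) : Prop :=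
  ∀ ⦃u : V⦄ (p : G.Walk u u), p.IsCycle → walkSign sg p = 1

/-- 2-connectedness: at least 3 vertices and deleting any vertex leaves a connected graph. -/
def TwoConnected [Fintype V] (G : SimpleGraph V) : Prop :=
  3 ≤ Fintype.card V ∧ ∀ v : V, ((⊤ : G.Subgraph).deleteVerts {v}).coe.Connected

/-- Signature of the associated signed complete graph `K^{D^max}(Σ)`:
edges of `G` keep their sign, non-adjacent pairs get `sigmaMax`. -/
noncomputable def kSigMax (G : SimpleGraph V) (sg : V → V → ℤ) (u v : V) : ℤ := by
  classical
  exact if G.Adj u v then sg u v else sigmaMax G sg u v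

/-- Signature of the associated signed complete graph `K^{D^min}(Σ)`. -/
noncomputable def kSigMin (G : SimpleGraph V) (sg : V → V → ℤ) (u v : V) : ℤ := by
  classical
  exact if G.Adj u v then sg u v else sigmaMin G sg u v

/- Replace each edge `ab` of `P` by a shortest `a`–`b` path of `G`; it has length between
`1` and `n`, and by uniqueness of the power its sign is `σ′(ab)`. The resulting walk has the right
sign and length between `k` and `kn`; a back-and-forth detour along one edge adds `2` to the length
without changing the sign, and since the target interval `[(k-1)n+1, kn]` has `n` elements (so contains
both parities once `n ≥ 2`), finitely many detours bring the length into it. -/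

namespace SimpleGraph.Walk

variable {G : SimpleGraph V} (sg : V → V → ℤ)

lemma walkSign_cons {u w v : V} (h : G.Adj u w) (p : G.Walk w v) :
    walkSign sg (cons h p) = sg u w * walkSign sg p := by
  simp [walkSign]

lemma walkSign_append {u w v : V} (p : G.Walk u w) (q : G.Walk w v) :
    walkSign sg (p.append q) = walkSign sg p * walkSign sg q := by
  simp [walkSign, darts_append]

variable {sg}

lemma walkSign_eq_one_or_neg_one (hval : ∀ u v, G.Adj u v → sg u v = 1 ∨ sg u v = -1)
    {u v : V} (p : G.Walk u v) : walkSign sg p = 1 ∨ walkSign sg p = -1 := by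
  induction p with
  | nil => exact Or.inl rfl
  | cons h q ih =>
    rw [walkSign_cons]
    rcases hval _ _ h with h1 | h1 <;> rcases ih with h2 | h2 <;> simp [h1, h2]

lemma exists_walkSign_eq_length_add_two_mul (hsym : ∀ u v, sg u v = sg v u)
    (hval : ∀ u v, G.Adj u v → sg u v = 1 ∨ sg u v = -1)
    {u w v : V} (h : G.Adj u w) (p : G.Walk u v) (j : ℕ) :
    ∃ q : G.Walk u v, q.length = p.length + 2 * j ∧ walkSign sg q = walkSign sg p := by
  induction j with
  | zero => exact ⟨p, rfl, rfl⟩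
  | succ j ih =>
    obtain ⟨q, hq, hsign⟩ := ih
    have hsq : sg u w * sg w u = 1 := by
      rw [hsym w u]; rcases hval u w h with h1 | h1 <;> simp [h1]
    refine ⟨cons h (cons h.symm q), by simp only [length_cons]; omega, ?_⟩
    rw [walkSign_cons, walkSign_cons, ← mul_assoc, hsq, one_mul, hsign]

end SimpleGraph.Walk

open Walk

lemma sigmaMax_eq_walkSign {G : SimpleGraph V} {sg : V → V → ℤ}
    (hval : ∀ u v, G.Adj u v → sg u v = 1 ∨ sg u v = -1) {u v : V}
    (hcomp : pairCompatible G sg u v) (p : G.Walk u v) (hp : p.length = G.dist u v) :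
    sigmaMax G sg u v = walkSign sg p := by
  rcases walkSign_eq_one_or_neg_one hval p with h1 | h1
  · rw [h1, sigmaMax, if_pos ⟨p, hp, h1⟩]
  · rw [h1, sigmaMax, if_neg]
    rintro ⟨q, hq, hq1⟩
    have := hcomp p q hp hq
    rw [h1, hq1] at this
    exact absurd this (by norm_num)

lemma exists_walk_of_powerGraph_walk {G : SimpleGraph V} {sg : V → V → ℤ} (hconn : G.Connected)
    (hval : ∀ u v, G.Adj u v → sg u v = 1 ∨ sg u v = -1) {n : ℕ}
    (huniq : ∀ u v : V, u ≠ v → G.dist u v ≤ n → pairCompatible G sg u v)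
    {u v : V} (P : (powerGraph G n).Walk u v) :
    ∃ Q : G.Walk u v, P.length ≤ Q.length ∧ Q.length ≤ P.length * n ∧
      walkSign sg Q = walkSign (sigmaMax G sg) P := by
  induction P with
  | nil => exact ⟨nil, le_rfl, by simp, rfl⟩
  | @cons a b c h P ih =>
    obtain ⟨Q, hPQ, hQP, hsign⟩ := ih
    obtain ⟨p, hp⟩ := hconn.exists_walk_length_eq_dist a b
    have hp_pos : 0 < p.length := hp ▸ hconn.pos_dist_of_ne h.1
    have hp_le : p.length ≤ n := hp ▸ h.2
    refine ⟨p.append Q, ?_, ?_, ?_⟩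
    · simp only [length_append, length_cons]; omega
    · simp only [length_append, length_cons, Nat.succ_mul]; omega
    · rw [walkSign_append, walkSign_cons, hsign,
        sigmaMax_eq_walkSign hval (huniq a b h.1 h.2) p hp]

lemma exists_add_two_mul_mem_Icc {k n L : ℕ} (hk : 1 ≤ k) (hkL : k ≤ L) (hLk : L ≤ k * n) :
    ∃ j, (k - 1) * n + 1 ≤ L + 2 * j ∧ L + 2 * j ≤ k * n := by
  obtain ⟨k, rfl⟩ : ∃ k', k = k' + 1 := ⟨k - 1, by omega⟩
  simp only [add_tsub_cancel_right, add_mul, one_mul] at hkL hLk ⊢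
  rcases Nat.lt_or_ge n 2 with hn | hn
  · interval_cases n
    · omega
    · exact ⟨0, by omega, by omega⟩
  · exact ⟨(k * n + 2 - L) / 2, by omega, by omega⟩

theorem path_in_power_comes_from_path_general {V : Type*} (G : SimpleGraph V) (sg : V → V → ℤ)
    (hconn : G.Connected) (hsym : ∀ u v, sg u v = sg v u)
    (hval : ∀ u v, G.Adj u v → sg u v = 1 ∨ sg u v = -1)
    (n : ℕ)
    (huniq : ∀ u v : V, u ≠ v → G.dist u v ≤ n → pairCompatible G sg u v)
    (u v : V) (hne : u ≠ v) (P : (powerGraph G n).Walk u v) :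
    ∃ P' : G.Walk u v,
      (P.length - 1) * n + 1 ≤ P'.length ∧ P'.length ≤ P.length * n ∧
      walkSign sg P' = walkSign (sigmaMax G sg) P := by
  obtain ⟨Q, hPQ, hQP, hsign⟩ := exists_walk_of_powerGraph_walk hconn hval huniq P
  have hP_pos : 0 < P.length := not_nil_iff_lt_length.mp (not_nil_of_ne hne)
  obtain ⟨j, hj_ge, hj_le⟩ := exists_add_two_mul_mem_Icc hP_pos hPQ hQP
  obtain ⟨R, hR, hRsign⟩ :=
    exists_walkSign_eq_length_add_two_mul hsym hval (adj_snd (p := Q) (not_nil_of_ne hne)) Q j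
  exact ⟨R, hR ▸ hj_ge, hR ▸ hj_le, hRsign.trans hsign⟩

theorem path_in_power_comes_from_path {V : Type*} [Fintype V] (G : SimpleGraph V) (sg : V → V → ℤ)
    (hconn : G.Connected) (hsym : ∀ u v, sg u v = sg v u)
    (hval : ∀ u v, G.Adj u v → sg u v = 1 ∨ sg u v = -1)
    (n : ℕ) (hn : 1 ≤ n)
    (huniq : ∀ u v : V, u ≠ v → G.dist u v ≤ n → pairCompatible G sg u v)
    (u v : V) (hne : u ≠ v) (P : (powerGraph G n).Walk u v) (hP : P.IsPath) :
    ∃ P' : G.Walk u v,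
      (P.length - 1) * n + 1 ≤ P'.length ∧ P'.length ≤ P.length * n ∧
      walkSign sg P' = walkSign (sigmaMax G sg) P :=
  path_in_power_comes_from_path_general G sg hconn hsym hval n huniq u v hne P
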